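/- arXiv:math/0302257 — 6 statements merged into one kernel-verified Lean document; each statement's English description precedes it below -/
import Mathlib

section
/- The number of TL-states of length h with f empty slots equals the Stirling number of the second kind S(h+1, f+1). Here a TL-state is an h-tuple ν̂ in {0,1,...,h}^h (with 0 denoting 'empty') such that for each t, either ν̂_t = 0 or ν̂_t ≥ t, and for distinct j,k with ν̂_j, ν̂_k nonzero, ν̂_j − j ≠ ν̂_k − k; it has f empty slots if exactly f coordinates equal 0. -/
open Finset
open scoped Classical

/-- Stirling numbers of the second kind. -/
def stirling : ℕ → ℕ → ℕ
  | 0, 0 => 1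
  | 0, _ + 1 => 0
  | _ + 1, 0 => 0
  | n + 1, k + 1 => (k + 1) * stirling n (k + 1) + stirling n k

/-- Bell numbers. -/
def bellNum (n : ℕ) : ℕ := ∑ k ∈ Finset.range (n + 1), stirling n k

/-- A TL-state of length `h`: `ν t = 0` means no ball lands at (1-based) time `t+1`;
otherwise `ν t` is the airtime of the ball landing at time `t+1`, which must be `≥ t+1`,
and no two balls were thrown at the same instant. -/
def IsTL (h : ℕ) (ν : Fin h → Fin (h + 1)) : Prop :=
  (∀ t : Fin h, (ν t : ℕ) = 0 ∨ t.val + 1 ≤ (ν t : ℕ)) ∧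
  ∀ j k : Fin h, j ≠ k → (ν j : ℕ) ≠ 0 → (ν k : ℕ) ≠ 0 →
    (ν j : ℕ) + k.val ≠ (ν k : ℕ) + j.val

/-- Number of empty slots of a TL-state. -/
def tlZeros {h : ℕ} (ν : Fin h → Fin (h + 1)) : ℕ :=
  (Finset.univ.filter (fun t : Fin h => (ν t : ℕ) = 0)).card

/-- Number of zeros of a landing state. -/
def numZeros {h : ℕ} (ν : Fin h → Bool) : ℕ :=
  (Finset.univ.filter (fun t : Fin h => ν t = false)).card

/-- `φ_t(ν)` (with `t : Fin h` representing 1-based time `t+1`). -/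
def phi {h : ℕ} (ν : Fin h → Bool) (t : Fin h) : ℕ :=
  if ν t = true then
    (Finset.univ.filter (fun j : Fin h => t < j ∧ ν j = false)).card
  else 0

/-- The weight `Δ(ν)`. -/
def Delta {h : ℕ} (ν : Fin h → Bool) : ℕ := ∏ t : Fin h, (1 + phi ν t)

/-- 1-based access to a landing state, `false` out of range (convention `ν_t = 0` for `t > h`). -/
def getB {h : ℕ} (ν : Fin h → Bool) (j : ℕ) : Bool :=
  if hj : 1 ≤ j ∧ j ≤ h then ν ⟨j - 1, by omega⟩ else false

/-- Throwing operator on landing states: `theta 0` is the left shift (wait), and for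
`1 ≤ j`, `theta j` shifts left and places a ball at 1-based position `j`. -/
def theta {h : ℕ} (j : ℕ) (ν : Fin h → Bool) : Fin h → Bool :=
  fun t => if t.val + 1 = j then true else getB ν (t.val + 2)

/-- 1-based access to a TL-state given as a ℕ-valued tuple, `0` out of range. -/
def getN {h : ℕ} (ν : Fin h → ℕ) (j : ℕ) : ℕ :=
  if hj : 1 ≤ j ∧ j ≤ h then ν ⟨j - 1, by omega⟩ else 0

/-- Throwing operator on ℕ-valued TL-states. -/
def thetaN {h : ℕ} (j : ℕ) (ν : Fin h → ℕ) : Fin h → ℕ :=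
  fun t => if t.val + 1 = j then j else getN ν (t.val + 2)

/-- Transition probabilities for the standard juggling chain on landing states. -/
noncomputable def pStd (h f : ℕ) (ν ω : Fin h → Bool) : ℝ :=
  if getB ν 1 = false then (if ω = theta 0 ν then 1 else 0)
  else if ∃ j, 1 ≤ j ∧ j ≤ h ∧ getB ν (j + 1) = false ∧ ω = theta j ν then
    1 / ((f : ℝ) + 1)
  else 0

/-- The set of landing states with exactly `f` zeros. -/
noncomputable def States (h f : ℕ) : Finset (Fin h → Bool) :=
  Finset.univ.filter (fun ν => numZeros ν = f)

/-- The set of TL-states with exactly `f` empty slots. -/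
noncomputable def TLStates (h f : ℕ) : Finset (Fin h → Fin (h + 1)) :=
  Finset.univ.filter (fun ν => IsTL h ν ∧ tlZeros ν = f)

/-- Projection from TL-states to landing states. -/
def proj {h : ℕ} (ν : Fin h → Fin (h + 1)) : Fin h → Bool :=
  fun t => decide ((ν t : ℕ) ≠ 0)

/-- Transition probabilities for the TL-state chain. -/
noncomputable def pHat (h f : ℕ) (μ ν : Fin h → Fin (h + 1)) : ℝ :=
  if getN (h := h) (fun s => (μ s : ℕ)) 1 = 0 then
    (if (fun s => (ν s : ℕ)) = thetaN 0 (fun s => (μ s : ℕ)) then 1 else 0)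
  else if ∃ j, 1 ≤ j ∧ j ≤ h ∧ getN (h := h) (fun s => (μ s : ℕ)) (j + 1) = 0 ∧
      (fun s => (ν s : ℕ)) = thetaN j (fun s => (μ s : ℕ)) then
    1 / ((f : ℝ) + 1)
  else 0

/-!
Split off the first slot. Deleting slot 1 and lowering every other airtime by one keeps each
throw instant `ν̂_t - t`, so it maps TL-states of length `h + 1` onto TL-states of length `h`.
Conversely, a TL-state of length `h` with `f` empty slots extends by an empty first slot in one
way, and by a ball in the first slot in `f + 1` ways: its airtime ranges over `{1, …, h + 1}`
minus the `h - f` distinct values `ν̂_t - t + 1`, which would repeat a throw instant. This is the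
recurrence `S(h + 2, f + 1) = (f + 1) S(h + 1, f + 1) + S(h + 1, f)`.
-/

namespace TLState

variable {h : ℕ}

def tail (ν : Fin (h + 1) → Fin (h + 2)) : Fin h → Fin (h + 1) :=
  fun s => ⟨ν s.succ - 1, by omega⟩

def cons (c : Fin (h + 2)) (ν : Fin h → Fin (h + 1)) : Fin (h + 1) → Fin (h + 2) :=
  Fin.cons c fun s => if (ν s : ℕ) = 0 then 0 else (ν s).succ

@[simp]
lemma tail_val (ν : Fin (h + 1) → Fin (h + 2)) (s : Fin h) :
    (tail ν s : ℕ) = (ν s.succ : ℕ) - 1 :=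
  rfl

@[simp]
lemma cons_zero (c : Fin (h + 2)) (ν : Fin h → Fin (h + 1)) : cons c ν 0 = c :=
  rfl

@[simp]
lemma cons_succ_val (c : Fin (h + 2)) (ν : Fin h → Fin (h + 1)) (s : Fin h) :
    (cons c ν s.succ : ℕ) = if (ν s : ℕ) = 0 then 0 else (ν s : ℕ) + 1 := by
  simp only [cons, Fin.cons_succ]
  split <;> rfl

lemma tail_cons (c : Fin (h + 2)) (ν : Fin h → Fin (h + 1)) : tail (cons c ν) = ν := by
  ext s
  simp only [tail_val, cons_succ_val]
  split <;> omega

lemma cons_self_tail {ν : Fin (h + 1) → Fin (h + 2)} (hν : IsTL (h + 1) ν) :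
    cons (ν 0) (tail ν) = ν := by
  ext t
  induction t using Fin.cases with
  | zero => rfl
  | succ s =>
    have := hν.1 s.succ
    simp only [Fin.val_succ] at this
    rw [cons_succ_val, tail_val]
    split <;> omega

lemma isTL_cons_iff (c : Fin (h + 2)) (ν : Fin h → Fin (h + 1)) :
    IsTL (h + 1) (cons c ν) ↔
      IsTL h ν ∧ ∀ s : Fin h, (c : ℕ) ≠ 0 → (ν s : ℕ) ≠ 0 → (c : ℕ) + s ≠ (ν s : ℕ) := by
  simp only [IsTL, Fin.forall_fin_succ, cons_zero, cons_succ_val, Fin.val_succ, Fin.val_zero]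
  constructor
  · rintro ⟨⟨-, hlow⟩, ⟨-, hhead⟩, hpair⟩
    refine ⟨⟨fun t => ?_, fun j k hjk hj hk => ?_⟩, fun s hc hs => ?_⟩
    · have := hlow t
      grind
    · have := (hpair j).2 k (by simpa using hjk)
      grind
    · have := hhead s (Fin.succ_ne_zero s).symm hc
      grind
  · rintro ⟨⟨hlow, hpair⟩, hhead⟩
    refine ⟨⟨by omega, fun t => ?_⟩, ⟨by simp, fun s _ hc hs => ?_⟩,
      fun j => ⟨fun _ hj hc => ?_, fun k hjk hj hk => ?_⟩⟩
    · have := hlow t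
      grind
    · have := hhead s hc
      grind
    · have := hhead j hc
      grind
    · have := hpair j k (by simpa using hjk)
      grind

lemma tlZeros_cons (c : Fin (h + 2)) (ν : Fin h → Fin (h + 1)) :
    tlZeros (cons c ν) = (if (c : ℕ) = 0 then 1 else 0) + tlZeros ν := by
  simp only [tlZeros, Finset.card_filter, Fin.sum_univ_succ, cons_zero, cons_succ_val]
  congr 1
  refine Finset.sum_congr rfl fun s _ => ?_
  split_ifs <;> omega

lemma tlZeros_le (ν : Fin h → Fin (h + 1)) : tlZeros ν ≤ h :=
  (Finset.card_filter_le _ _).trans_eq (Finset.card_fin h)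

def freeHeights (ν : Fin h → Fin (h + 1)) : Finset (Fin (h + 2)) :=
  Finset.univ.filter fun c => (c : ℕ) ≠ 0 ∧ ∀ s : Fin h, (ν s : ℕ) ≠ 0 → (c : ℕ) + s ≠ (ν s : ℕ)

lemma card_freeHeights {ν : Fin h → Fin (h + 1)} (hν : IsTL h ν) :
    (freeHeights ν).card = tlZeros ν + 1 := by
  set support := Finset.univ.filter fun s : Fin h => (ν s : ℕ) ≠ 0
  let throwInstant (s : Fin h) : Fin (h + 2) := ⟨ν s - s, by omega⟩
  have hsupport : tlZeros ν + support.card = h :=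
    (Finset.card_filter_add_card_filter_not _).trans (Finset.card_fin h)
  have hlow (s : Fin h) (hs : (ν s : ℕ) ≠ 0) : s.val + 1 ≤ ν s := (hν.1 s).resolve_left hs
  have hinj : Set.InjOn throwInstant support := by
    intro j hj k hk hjk
    have hj := hlow j (Finset.mem_filter.mp hj).2
    have hk := hlow k (Finset.mem_filter.mp hk).2
    have hjk : (ν j : ℕ) - j = ν k - k := Fin.ext_iff.mp hjk
    by_contra hne
    exact hν.2 j k hne (by omega) (by omega) (by omega)
  have hfree : freeHeights ν = (insert 0 (support.image throwInstant))ᶜ := by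
    ext c
    simp only [freeHeights, support, throwInstant, Finset.mem_filter, Finset.mem_compl,
      Finset.mem_insert, Finset.mem_image, Finset.mem_univ, true_and, Fin.ext_iff]
    constructor
    · rintro ⟨hc, hfree⟩ (hc0 | ⟨s, hs, hsc⟩)
      · exact hc hc0
      · exact hfree s hs (by have := hlow s hs; omega)
    · refine fun hc => ⟨fun hc0 => hc (.inl hc0), fun s hs hsc => hc (.inr ⟨s, hs, by omega⟩)⟩
  have hzero : 0 ∉ support.image throwInstant := by
    simp only [Finset.mem_image, not_exists, not_and]
    intro s hs hs0
    have := hlow s (Finset.mem_filter.mp hs).2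
    have hs0 : (ν s : ℕ) - s = 0 := Fin.ext_iff.mp hs0
    omega
  rw [hfree, Finset.card_compl, Finset.card_insert_of_notMem hzero,
    Finset.card_image_of_injOn hinj, Fintype.card_fin]
  have := tlZeros_le ν
  omega

lemma mem_TLStates {f : ℕ} {ν : Fin h → Fin (h + 1)} :
    ν ∈ TLStates h f ↔ IsTL h ν ∧ tlZeros ν = f := by
  simp [TLStates]

lemma cons_mem_TLStates_iff {f : ℕ} (c : Fin (h + 2)) (ν : Fin h → Fin (h + 1)) :
    cons c ν ∈ TLStates (h + 1) f ↔
      (IsTL h ν ∧ ∀ s : Fin h, (c : ℕ) ≠ 0 → (ν s : ℕ) ≠ 0 → (c : ℕ) + s ≠ (ν s : ℕ)) ∧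
        (if (c : ℕ) = 0 then 1 else 0) + tlZeros ν = f := by
  rw [mem_TLStates, isTL_cons_iff, tlZeros_cons]

lemma card_TLStates_length_zero (f : ℕ) : (TLStates 0 f).card = if f = 0 then 1 else 0 := by
  have hmem (ν : Fin 0 → Fin 1) : ν ∈ TLStates 0 f ↔ f = 0 := by
    simp [mem_TLStates, IsTL, tlZeros, eq_comm]
  split_ifs with hf
  · simp [Finset.eq_univ_of_forall fun ν => (hmem ν).2 hf]
  · simp [Finset.eq_empty_of_forall_notMem fun ν => mt (hmem ν).1 hf]

lemma filter_head_eq_zero_TLStates_zero :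
    (TLStates (h + 1) 0).filter (fun ν => (ν 0 : ℕ) = 0) = ∅ := by
  refine Finset.filter_false_of_mem fun ν hν hν0 => ?_
  have hz := (mem_TLStates.mp hν).2
  rw [tlZeros, Finset.card_eq_zero, Finset.filter_eq_empty_iff] at hz
  exact hz (Finset.mem_univ 0) hν0

lemma card_filter_head_eq_zero_TLStates (f : ℕ) :
    ((TLStates (h + 1) (f + 1)).filter fun ν => (ν 0 : ℕ) = 0).card = (TLStates h f).card := by
  refine Finset.card_nbij' tail (cons 0) (fun ν hν => ?_) (fun ν hν => ?_) (fun ν hν => ?_)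
    (fun ν _ => tail_cons 0 ν)
  · obtain ⟨hν, hν0⟩ := Finset.mem_filter.mp hν
    rw [← cons_self_tail (mem_TLStates.mp hν).1, cons_mem_TLStates_iff, if_pos hν0] at hν
    exact mem_TLStates.mpr ⟨hν.1.1, by omega⟩
  · obtain ⟨hTL, hz⟩ := mem_TLStates.mp hν
    refine Finset.mem_filter.mpr ⟨(cons_mem_TLStates_iff 0 ν).mpr ?_, rfl⟩
    exact ⟨⟨hTL, fun s h0 => (h0 rfl).elim⟩, by simp [hz, add_comm]⟩
  · obtain ⟨hν, hν0⟩ := Finset.mem_filter.mp hν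
    have hν0 : ν 0 = 0 := Fin.ext hν0
    simpa only [hν0] using cons_self_tail (mem_TLStates.mp hν).1

lemma card_tail_fiber {f : ℕ} {ν' : Fin h → Fin (h + 1)} (hν' : ν' ∈ TLStates h f) :
    (((TLStates (h + 1) f).filter fun ν => (ν 0 : ℕ) ≠ 0).filter fun ν => tail ν = ν').card =
      f + 1 := by
  obtain ⟨hTL, hz⟩ := mem_TLStates.mp hν'
  rw [← hz, ← card_freeHeights hTL]
  refine Finset.card_nbij' (· 0) (cons · ν') (fun ν hν => ?_) (fun c hc => ?_) (fun ν hν => ?_)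
    (fun c _ => rfl)
  · obtain ⟨⟨hν, hν0⟩, rfl⟩ := Finset.mem_filter.mp hν |>.imp_left Finset.mem_filter.mp
    rw [← cons_self_tail (mem_TLStates.mp hν).1, cons_mem_TLStates_iff] at hν
    exact Finset.mem_filter.mpr ⟨Finset.mem_univ _, hν0, fun s => hν.1.2 s hν0⟩
  · obtain ⟨hc0, hc⟩ := (Finset.mem_filter.mp hc).2
    have hcons : cons c ν' ∈ TLStates (h + 1) (tlZeros ν') :=
      (cons_mem_TLStates_iff c ν').mpr ⟨⟨hTL, fun s _ => hc s⟩, by rw [if_neg hc0, zero_add]⟩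
    exact Finset.mem_filter.mpr ⟨Finset.mem_filter.mpr ⟨hcons, hc0⟩, tail_cons c ν'⟩
  · obtain ⟨⟨hν, -⟩, rfl⟩ := Finset.mem_filter.mp hν |>.imp_left Finset.mem_filter.mp
    exact cons_self_tail (mem_TLStates.mp hν).1

lemma card_filter_head_ne_zero_TLStates (f : ℕ) :
    ((TLStates (h + 1) f).filter fun ν => (ν 0 : ℕ) ≠ 0).card =
      (f + 1) * (TLStates h f).card := by
  have htail : Set.MapsTo (tail (h := h))
      ↑((TLStates (h + 1) f).filter fun ν => (ν 0 : ℕ) ≠ 0) ↑(TLStates h f) := by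
    intro ν hν
    obtain ⟨hν, hν0⟩ := Finset.mem_filter.mp hν
    rw [← cons_self_tail (mem_TLStates.mp hν).1, cons_mem_TLStates_iff, if_neg hν0,
      zero_add] at hν
    exact mem_TLStates.mpr ⟨hν.1.1, hν.2⟩
  rw [Finset.card_eq_sum_card_fiberwise htail,
    Finset.sum_congr rfl fun ν' hν' => card_tail_fiber hν', Finset.sum_const, smul_eq_mul,
    mul_comm]

end TLState

/-- The number of TL-states of length `h` with `f` empty slots is `S(h+1, f+1)`. -/
theorem stmt0 (h f : ℕ) : (TLStates h f).card = stirling (h + 1) (f + 1) := by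
  induction h generalizing f with
  | zero => cases f <;> simp [TLState.card_TLStates_length_zero, stirling]
  | succ h ih =>
    rw [← Finset.card_filter_add_card_filter_not (p := fun ν => (ν 0 : ℕ) = 0),
      TLState.card_filter_head_ne_zero_TLStates, ih]
    cases f with
    | zero =>
      rw [TLState.filter_head_eq_zero_TLStates_zero, Finset.card_empty, add_comm]
      rfl
    | succ f =>
      rw [TLState.card_filter_head_eq_zero_TLStates, ih, add_comm]
      rfl
end

section
/- For each landing state ν ∈ {0,1}^h with exactly h−f ones, the number of TL-states ν̂ projecting to ν (i.e., ν̂_t ≠ 0 exactly when ν_t = 1) equals Δ(ν) = ∏_{t=1}^h (1 + φ_t(ν)), where φ_t(ν) = |{j : t < j ≤ h, ν_j = 0}| if ν_t = 1, and φ_t(ν) = 0 if ν_t = 0. -/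
open Finset
open scoped Classical

/-!
A TL-state whose balls land exactly in the slots `S` is determined by the throw times
`ν̂_t - t` of these balls, and the TL condition says that they are distinct. Build `S` by adding
its slots from the latest to the earliest. When the earliest slot `a` (0-based) is added, the new
ball may get any airtime in `[a + 1, h]` whose throw time avoids the `#S` throw times already in
use; these all lie in the same window of `h - a` values, so there are
`h - a - #S = 1 + φ_a(ν)` choices, and the product of these counts is `Δ(ν)`.
-/

section Gaps

variable {ι : Type*} [Fintype ι] [LinearOrder ι]

def gapsAbove (S : Finset ι) (t : ι) : ℕ :=
  #{j | t < j ∧ j ∉ S}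

lemma gapsAbove_insert_of_lt {S : Finset ι} {a t : ι} (hat : a < t) :
    gapsAbove (insert a S) t = gapsAbove S t := by
  refine congrArg card (filter_congr fun j _ => ?_)
  simp only [mem_insert, not_or, and_congr_right_iff]
  exact fun htj => and_iff_right (hat.trans htj).ne'

lemma card_add_gapsAbove_insert_min {S : Finset ι} {a : ι} (ha : ∀ t ∈ S, a < t) :
    #S + gapsAbove (insert a S) a = #{j | a < j} := by
  have hS : ({j | a < j ∧ j ∈ S} : Finset ι) = S := by
    ext j
    simp only [mem_filter, mem_univ, true_and, and_iff_right_iff_imp]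
    exact ha j
  have hgaps : gapsAbove (insert a S) a = #{j | a < j ∧ j ∉ S} := by
    refine congrArg card (filter_congr fun j _ => ?_)
    simp only [mem_insert, not_or, and_congr_right_iff]
    exact fun haj => and_iff_right haj.ne'
  calc #S + gapsAbove (insert a S) a
      = #{j ∈ {j | a < j} | j ∈ S} + #{j ∈ {j | a < j} | j ∉ S} := by
        rw [filter_filter, filter_filter, hS, hgaps]
    _ = #{j | a < j} := card_filter_add_card_filter_not _

end Gaps

section TLStates

variable {h : ℕ}

def IsTLOn (h : ℕ) (S : Finset (Fin h)) (g : Fin h → Fin (h + 1)) : Prop :=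
  (∀ t ∈ S, t.val + 1 ≤ g t) ∧ (∀ t ∉ S, g t = 0) ∧
    ∀ j ∈ S, ∀ k ∈ S, j ≠ k → (g j : ℕ) + k ≠ g k + j

noncomputable def tlStatesOn (h : ℕ) (S : Finset (Fin h)) : Finset (Fin h → Fin (h + 1)) :=
  univ.filter (IsTLOn h S)

lemma isTL_and_proj_eq_iff (g : Fin h → Fin (h + 1)) (ν : Fin h → Bool) :
    IsTL h g ∧ proj g = ν ↔ IsTLOn h {t | ν t = true} g := by
  have hproj : proj g = ν ↔ ∀ t, ((g t : ℕ) ≠ 0 ↔ ν t = true) := by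
    simp only [funext_iff, proj]
    exact forall_congr' fun t => by rw [Bool.eq_iff_iff, decide_eq_true_iff]
  rw [hproj, IsTL, IsTLOn]
  simp only [mem_filter, mem_univ, true_and, Fin.ext_iff, Fin.val_zero]
  constructor
  · rintro ⟨⟨hlow, hdist⟩, hsupp⟩
    refine ⟨fun t ht => (hlow t).resolve_left ((hsupp t).2 ht), fun t ht => ?_,
      fun j hj k hk hjk => hdist j k hjk ((hsupp j).2 hj) ((hsupp k).2 hk)⟩
    by_contra h0
    exact ht ((hsupp t).1 h0)
  · rintro ⟨hlow, hzero, hdist⟩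
    have hsupp : ∀ t, ((g t : ℕ) ≠ 0 ↔ ν t = true) := fun t => by
      by_cases ht : ν t = true
      · simp only [ht, iff_true]; have := hlow t ht; omega
      · simp [ht, hzero t ht]
    exact ⟨⟨fun t => by by_cases ht : ν t = true <;> simp_all,
      fun j k hjk hj hk => hdist j ((hsupp j).1 hj) k ((hsupp k).1 hk) hjk⟩, hsupp⟩

lemma isTLOn_insert_iff {S : Finset (Fin h)} {a : Fin h} (ha : a ∉ S)
    (g : Fin h → Fin (h + 1)) :
    IsTLOn h (insert a S) g ↔ IsTLOn h S (Function.update g a 0) ∧ a.val + 1 ≤ g a ∧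
      ∀ t ∈ S, (g a : ℕ) + t ≠ g t + a := by
  have hne : ∀ t ∈ S, t ≠ a := fun t ht hta => ha (hta ▸ ht)
  simp only [IsTLOn, mem_insert]
  constructor
  · rintro ⟨hlow, hzero, hdist⟩
    refine ⟨⟨fun t ht => ?_, fun t ht => ?_, fun j hj k hk hjk => ?_⟩, hlow a (.inl rfl),
      fun t ht => hdist a (.inl rfl) t (.inr ht) (hne t ht).symm⟩
    · simpa [hne t ht] using hlow t (.inr ht)
    · by_cases hta : t = a
      · simp [hta]
      · simpa [hta] using hzero t (by tauto)
    · simpa [hne j hj, hne k hk] using hdist j (.inr hj) k (.inr hk) hjk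
  · rintro ⟨⟨hlow, hzero, hdist⟩, hlowa, hdista⟩
    refine ⟨fun t ht => ?_, fun t ht => ?_, fun j hj k hk hjk => ?_⟩
    · rcases ht with rfl | ht
      · exact hlowa
      · simpa [hne t ht] using hlow t ht
    · rw [not_or] at ht
      simpa [ht.1] using hzero t ht.2
    · rcases hj with rfl | hj <;> rcases hk with rfl | hk
      · exact absurd rfl hjk
      · exact hdista k hk
      · exact fun e => hdista j hj e.symm
      · simpa [hne j hj, hne k hk] using hdist j hj k hk hjk

lemma card_Icc_sdiff_throwTimes {S : Finset (Fin h)} {a : Fin h} (ha : ∀ t ∈ S, a < t)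
    {g : Fin h → Fin (h + 1)} (hg : IsTLOn h S g) :
    #(Icc (a.val + 1) h \ S.image (fun t => (g t : ℕ) + a - t)) = h - a - #S := by
  have hbound : ∀ t ∈ S, a + 1 ≤ (g t : ℕ) + a - t ∧ (g t : ℕ) + a - t ≤ h := fun t ht => by
    have := ha t ht; have := hg.1 t ht; have := (g t).is_le
    constructor <;> omega
  rw [card_sdiff_of_subset, Nat.card_Icc, card_image_of_injOn]
  · omega
  · intro t ht s hs hts
    by_contra hne
    have := hbound t ht; have := hbound s hs; have := hg.1 t ht; have := hg.1 s hs
    exact hg.2.2 t ht s hs hne (by simp only at hts; omega)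
  · intro v hv
    obtain ⟨t, ht, rfl⟩ := mem_image.1 hv
    exact mem_Icc.2 (hbound t ht)

/-- A ball landing at `a` before every ball of `S` may be given any airtime `v ≤ h` whose throw
time `v - a` differs from the throw times `g t - t` of the balls landing in `S`. -/
lemma card_fiber_update_min {S : Finset (Fin h)} {a : Fin h} (ha : ∀ t ∈ S, a < t)
    {g' : Fin h → Fin (h + 1)} (hg' : IsTLOn h S g') :
    #{g ∈ tlStatesOn h (insert a S) | Function.update g a 0 = g'} = h - a - #S := by
  have haS : a ∉ S := fun haS => lt_irrefl a (ha a haS)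
  have hg'a : g' a = 0 := hg'.2.1 a haS
  have hval : ∀ v ≤ h, (Fin.ofNat (h + 1) v : ℕ) = v := fun v hv => Nat.mod_eq_of_lt (by omega)
  rw [← card_Icc_sdiff_throwTimes ha hg']
  refine card_nbij' (fun g => (g a : ℕ))
    (fun (v : ℕ) => Function.update g' a (Fin.ofNat (h + 1) v)) ?_ ?_ ?_ ?_
  · intro g hg
    obtain ⟨hg, hupd⟩ := mem_filter.1 hg
    obtain ⟨-, hlowa, hdista⟩ := (isTLOn_insert_iff haS g).1 (mem_filter.1 hg).2
    have hgt : ∀ t ∈ S, g' t = g t := fun t ht => by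
      rw [← hupd, Function.update_of_ne (ha t ht).ne']
    simp only [mem_coe, mem_sdiff, mem_Icc, mem_image, not_exists, not_and]
    refine ⟨⟨hlowa, (g a).is_le⟩, fun t ht he => hdista t ht ?_⟩
    have := hg'.1 t ht
    rw [hgt t ht] at he this
    omega
  · intro v hv
    simp only [mem_coe, mem_sdiff, mem_Icc, mem_image, not_exists, not_and] at hv
    obtain ⟨⟨hva, hvh⟩, hvS⟩ := hv
    have hv := hval v hvh
    have hupd : Function.update (Function.update g' a (Fin.ofNat (h + 1) v)) a 0 = g' := by
      rw [Function.update_idem, ← hg'a, Function.update_eq_self]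
    dsimp only
    refine mem_filter.2 ⟨mem_filter.2 ⟨mem_univ _, (isTLOn_insert_iff haS _).2
      ⟨by rwa [hupd], by rwa [Function.update_self, hv], fun t ht => ?_⟩⟩, hupd⟩
    have := hg'.1 t ht
    have := hvS t ht
    rw [Function.update_self, Function.update_of_ne (ha t ht).ne', hv]
    omega
  · intro g hg
    dsimp only
    rw [← (mem_filter.1 hg).2, Function.update_idem, Fin.ofNat_val_eq_self,
      Function.update_eq_self]
  · intro v hv
    simp only [Function.update_self]
    exact hval v (mem_Icc.1 (mem_sdiff.1 hv).1).2

lemma tlStatesOn_empty : tlStatesOn h ∅ = {0} := by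
  ext g
  simp [tlStatesOn, IsTLOn, funext_iff]

theorem card_tlStatesOn (S : Finset (Fin h)) :
    #(tlStatesOn h S) = ∏ t ∈ S, (1 + gapsAbove S t) := by
  induction S using Finset.induction_on_min with
  | empty => simp [tlStatesOn_empty]
  | insert a S ha ih =>
    have haS : a ∉ S := fun haS => lt_irrefl a (ha a haS)
    have hmaps : Set.MapsTo (fun g => Function.update g a 0) (tlStatesOn h (insert a S))
        (tlStatesOn h S) := fun g hg =>
      mem_filter.2 ⟨mem_univ _, ((isTLOn_insert_iff haS g).1 (mem_filter.1 hg).2).1⟩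
    have hcount : h - a - #S = 1 + gapsAbove (insert a S) a := by
      have := card_add_gapsAbove_insert_min ha
      rw [filter_lt_eq_Ioi, Fin.card_Ioi] at this
      omega
    have hfibers : ∀ g' ∈ tlStatesOn h S,
        #{g ∈ tlStatesOn h (insert a S) | Function.update g a 0 = g'} = h - a - #S :=
      fun g' hg' => card_fiber_update_min ha (mem_filter.1 hg').2
    rw [card_eq_sum_card_fiberwise hmaps, sum_congr rfl hfibers,
      sum_const, smul_eq_mul, ih, prod_insert haS, hcount, mul_comm,
      prod_congr rfl fun t ht => by rw [← gapsAbove_insert_of_lt (S := S) (ha t ht)]]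

lemma delta_eq_prod_gapsAbove (ν : Fin h → Bool) :
    Delta ν = ∏ t ∈ {t | ν t = true}, (1 + gapsAbove {t | ν t = true} t) := by
  rw [prod_filter, Delta]
  refine prod_congr rfl fun t _ => ?_
  by_cases ht : ν t = true
  · simp [phi, gapsAbove, ht]
  · simp [phi, ht]

end TLStates

theorem stmt1_general (h : ℕ) (ν : Fin h → Bool) :
    (Finset.univ.filter
        (fun νh : Fin h → Fin (h + 1) => IsTL h νh ∧ proj νh = ν)).card = Delta ν := by
  calc #{νh | IsTL h νh ∧ proj νh = ν}
      = #(tlStatesOn h {t | ν t = true}) :=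
        congrArg card (filter_congr fun g _ => isTL_and_proj_eq_iff g ν)
    _ = Delta ν := by rw [card_tlStatesOn, delta_eq_prod_gapsAbove]

/-- The number of TL-states projecting to a landing state `ν` with `h - f` ones is `Δ(ν)`. -/
theorem stmt1 (h f : ℕ) (hf : f ≤ h) (ν : Fin h → Bool)
    (hones : (Finset.univ.filter (fun t : Fin h => ν t = true)).card = h - f) :
    (Finset.univ.filter
        (fun νh : Fin h → Fin (h + 1) => IsTL h νh ∧ proj νh = ν)).card = Delta ν :=
  stmt1_general h ν
end

section
/- Fix h ≥ 1 and 0 ≤ f ≤ h. The sum of the weights Δ(ν) = ∏_{t=1}^h (1 + φ_t(ν)) over all landing states ν ∈ {0,1}^h having exactly f zeros equals the Stirling number of the second kind S(h+1, f+1). -/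
open Finset
open scoped Classical

lemma numZeros_cons {h : ℕ} (b : Bool) (ν : Fin h → Bool) :
    numZeros (Fin.cons b ν) = (if b = false then 1 else 0) + numZeros ν := by
  unfold numZeros
  rw [Finset.card_filter, Finset.card_filter, Fin.sum_univ_succ]
  simp [Fin.cons_succ]

lemma phi_cons_zero {h : ℕ} (b : Bool) (ν : Fin h → Bool) :
    phi (Fin.cons b ν) 0 = if b = true then numZeros ν else 0 := by
  unfold phi numZeros
  rw [Finset.card_filter, Finset.card_filter, Fin.sum_univ_succ]
  simp [Fin.cons_succ, Fin.succ_pos]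

lemma phi_cons_succ {h : ℕ} (b : Bool) (ν : Fin h → Bool) (t : Fin h) :
    phi (Fin.cons b ν) t.succ = phi ν t := by
  unfold phi
  rw [Finset.card_filter, Finset.card_filter, Fin.sum_univ_succ]
  simp [Fin.cons_succ, Fin.succ_lt_succ_iff]

lemma Delta_cons {h : ℕ} (b : Bool) (ν : Fin h → Bool) :
    Delta (Fin.cons b ν) = (1 + (if b = true then numZeros ν else 0)) * Delta ν := by
  unfold Delta
  rw [Fin.prod_univ_succ, phi_cons_zero]
  congr 1
  exact Finset.prod_congr rfl (fun t _ => by rw [phi_cons_succ])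


lemma numZeros_cons_true {h : ℕ} (ν : Fin h → Bool) :
    numZeros (Fin.cons true ν) = numZeros ν := by simp [numZeros_cons]

lemma numZeros_cons_false {h : ℕ} (ν : Fin h → Bool) :
    numZeros (Fin.cons false ν) = 1 + numZeros ν := by simp [numZeros_cons]

lemma Delta_cons_true {h : ℕ} (ν : Fin h → Bool) :
    Delta (Fin.cons true ν) = (1 + numZeros ν) * Delta ν := by simp [Delta_cons]

lemma Delta_cons_false {h : ℕ} (ν : Fin h → Bool) :
    Delta (Fin.cons false ν) = Delta ν := by simp [Delta_cons]

lemma key (h : ℕ) : ∀ f, ∑ ν ∈ States h f, Delta ν = stirling (h + 1) (f + 1) := by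
  induction h with
  | zero =>
    intro f
    have huniv : (Finset.univ : Finset (Fin 0 → Bool)) = {fun t => t.elim0} := by
      apply Finset.eq_singleton_iff_unique_mem.2
      exact ⟨Finset.mem_univ _, fun x _ => funext fun t => t.elim0⟩
    cases f with
    | zero => simp [States, huniv, numZeros, Delta, stirling]
    | succ f => simp [States, huniv, numZeros, stirling]
  | succ h IH =>
    intro f
    rw [States, Finset.sum_filter]
    rw [← Equiv.sum_comp (Fin.consEquiv fun _ : Fin (h+1) => Bool)
      (fun ν => if numZeros ν = f then Delta ν else 0)]
    rw [Fintype.sum_prod_type, Fintype.sum_bool]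
    have e1 : ∀ b (ν : Fin h → Bool),
        (Fin.consEquiv fun _ : Fin (h+1) => Bool) (b, ν) = Fin.cons b ν := fun _ _ => rfl
    simp only [e1, numZeros_cons_true, numZeros_cons_false, Delta_cons_true, Delta_cons_false]
    have A : (∑ ν : Fin h → Bool,
        if numZeros ν = f then (1 + numZeros ν) * Delta ν else 0)
        = (f + 1) * stirling (h + 1) (f + 1) := by
      rw [← IH f, States, Finset.sum_filter, Finset.mul_sum]
      apply Finset.sum_congr rfl
      intro ν _
      split_ifs with hc
      · rw [hc]; ring
      · simp
    have B : (∑ ν : Fin h → Bool,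
        if 1 + numZeros ν = f then Delta ν else 0) = stirling (h + 1) f := by
      cases f with
      | zero => simp [stirling]
      | succ f =>
        rw [← IH f, States, Finset.sum_filter]
        apply Finset.sum_congr rfl
        intro ν _
        have hiff : (1 + numZeros ν = f + 1) ↔ numZeros ν = f := by omega
        simp [hiff]
    rw [A, B,
      show stirling (h + 1 + 1) (f + 1)
        = (f + 1) * stirling (h + 1) (f + 1) + stirling (h + 1) f from rfl]

/-- The sum of the weights `Δ(ν)` over landing states with exactly `f` zeros is `S(h+1,f+1)`. -/
theorem stmt2 (h f : ℕ) (hh : 1 ≤ h) (hf : f ≤ h) :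
    ∑ ν ∈ States h f, Delta ν = stirling (h + 1) (f + 1) := key h f
end

section
/- For a landing state ν ∈ {0,1}^h with ν_t = 1, the number of possible airtimes for the ball landing at time t, given the airtimes of all balls landing at later times, is h − t + 1 − #{i > t : ν_i = 1}, independently of which specific airtime values were chosen for the later-landing balls. Equivalently, this count equals 1 + φ_t(ν) where φ_t(ν) = #{j : t < j ≤ h, ν_j = 0}. -/
open Finset
open scoped Classical

/-- Given the airtimes of all balls landing after time `t`, the number of possible airtimes
for the ball landing at time `t` is `h − t + 1 − #{later-landing balls} = 1 + φ_t(ν)`,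
independently of the chosen later airtimes. -/
theorem stmt14 (h : ℕ) (ν : Fin h → Bool) (t : Fin h) (ht : ν t = true)
    (a : Fin h → ℕ)
    (ha1 : ∀ i : Fin h, t < i → ν i = true → i.val + 1 ≤ a i ∧ a i ≤ h)
    (ha0 : ∀ i : Fin h, t < i → ν i = false → a i = 0)
    (ha2 : ∀ i j : Fin h, t < i → t < j → i ≠ j → ν i = true → ν j = true →
      a i + j.val ≠ a j + i.val) :
    ((Finset.Icc (t.val + 1) h).filter
        (fun v => ∀ i : Fin h, t < i → ν i = true → v + i.val ≠ a i + t.val)).card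
      = h - t.val - (Finset.univ.filter (fun i : Fin h => t < i ∧ ν i = true)).card ∧
    ((Finset.Icc (t.val + 1) h).filter
        (fun v => ∀ i : Fin h, t < i → ν i = true → v + i.val ≠ a i + t.val)).card
      = 1 + phi ν t := by
  classical
  set T := Finset.univ.filter (fun i : Fin h => t < i ∧ ν i = true) with hT
  set g : Fin h → ℕ := fun i => a i + t.val - i.val with hg
  have hmem : ∀ i ∈ T, t < i ∧ ν i = true := by
    intro i hi; simpa [hT] using hi
  have hbound : ∀ i ∈ T, i.val + 1 ≤ a i ∧ a i ≤ h := by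
    intro i hi; obtain ⟨h1, h2⟩ := hmem i hi; exact ha1 i h1 h2
  have himg : ∀ i ∈ T, g i ∈ Finset.Icc (t.val + 1) h := by
    intro i hi
    obtain ⟨h1, h2⟩ := hmem i hi
    obtain ⟨h3, h4⟩ := hbound i hi
    have hlt : t.val < i.val := h1
    simp only [hg, Finset.mem_Icc]
    omega
  have hinj : Set.InjOn g ↑T := by
    intro i hi j hj hij
    by_contra hne
    have hi' : i ∈ T := hi
    have hj' : j ∈ T := hj
    obtain ⟨h1i, h2i⟩ := hmem i hi'
    obtain ⟨h1j, h2j⟩ := hmem j hj'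
    obtain ⟨h3i, h4i⟩ := hbound i hi'
    obtain ⟨h3j, h4j⟩ := hbound j hj'
    have hlti : t.val < i.val := h1i
    have hltj : t.val < j.val := h1j
    have : a i + j.val = a j + i.val := by
      simp only [hg] at hij; omega
    exact ha2 i j h1i h1j hne h2i h2j this
  have hset : ((Finset.Icc (t.val + 1) h).filter
      (fun v => ∀ i : Fin h, t < i → ν i = true → v + i.val ≠ a i + t.val))
        = Finset.Icc (t.val + 1) h \ T.image g := by
    ext v
    simp only [Finset.mem_filter, Finset.mem_sdiff, Finset.mem_image]
    constructor
    · rintro ⟨hv, hall⟩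
      refine ⟨hv, ?_⟩
      rintro ⟨i, hi, rfl⟩
      obtain ⟨h1, h2⟩ := hmem i hi
      obtain ⟨h3, h4⟩ := hbound i hi
      have hlt : t.val < i.val := h1
      exact hall i h1 h2 (by simp only [hg]; omega)
    · rintro ⟨hv, hnoti⟩
      refine ⟨hv, ?_⟩
      intro i h1 h2 heq
      obtain ⟨h3, h4⟩ := ha1 i h1 h2
      have hlt : t.val < i.val := h1
      exact hnoti ⟨i, by simp [hT, h1, h2], by simp only [hg]; omega⟩
  have hsub : T.image g ⊆ Finset.Icc (t.val + 1) h := by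
    intro v hv
    obtain ⟨i, hi, rfl⟩ := Finset.mem_image.mp hv
    exact himg i hi
  have hcardimg : (T.image g).card = T.card := Finset.card_image_of_injOn hinj
  have hIcc : (Finset.Icc (t.val + 1) h).card = h - t.val := by
    rw [Nat.card_Icc]; omega
  have hcard : ((Finset.Icc (t.val + 1) h).filter
      (fun v => ∀ i : Fin h, t < i → ν i = true → v + i.val ≠ a i + t.val)).card
        = h - t.val - T.card := by
    rw [hset, Finset.card_sdiff_of_subset hsub, hcardimg, hIcc]
  have hTle : T.card ≤ h - t.val := by
    calc T.card = (T.image g).card := hcardimg.symm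
    _ ≤ (Finset.Icc (t.val + 1) h).card := Finset.card_le_card hsub
    _ = h - t.val := hIcc
  refine ⟨hcard, ?_⟩
  rw [hcard]
  -- partition the indices > t by value of ν
  set F := Finset.univ.filter (fun j : Fin h => t < j ∧ ν j = false) with hF
  have hphi : phi ν t = F.card := by simp [phi, ht, hF]
  have hIoi : T.card + F.card = h - 1 - t.val := by
    have hsplit : T.card + F.card
        = (Finset.univ.filter (fun j : Fin h => t < j)).card := by
      rw [hT, hF]
      have := Finset.card_filter_add_card_filter_not
        (s := Finset.univ.filter (fun j : Fin h => t < j))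
        (p := fun j : Fin h => ν j = true)
      rw [Finset.filter_filter, Finset.filter_filter] at this
      rw [← this]
      congr 2
      ext j
      simp [Bool.not_eq_true]
    rw [hsplit]
    have : Finset.univ.filter (fun j : Fin h => t < j) = Finset.Ioi t := by
      ext j; simp
    rw [this, Fin.card_Ioi]
  have htlt : t.val < h := t.isLt
  rw [hphi]
  omega
end

section
/- In the standard juggling state graph G_{h,f}, the state ω₀ with ones in positions 1,...,h−f and zeros in positions h−f+1,...,h (the 'ground state') has weight Δ(ω₀) = (f+1)^{h−f}, and this is the maximum of Δ over all landing states in {0,1}^h with exactly f zeros; hence the ground state is the most likely state in the stationary distribution. -/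
open Finset
open scoped Classical

/-!
Only the ones of `ν` contribute factors to `Δ(ν)`, there are `h - f` of them, and each factor
`1 + φ_t(ν)` is at most `f + 1` since `φ_t(ν)` counts some of the `f` zeros. When every one
precedes every zero, as in the ground state, each `φ_t(ν)` with `ν_t = 1` counts all `f` zeros,
so the bound is attained.
-/

open Finset

section

variable {h : ℕ}

lemma card_filter_eq_true_add_numZeros (ν : Fin h → Bool) :
    #{t | ν t = true} + numZeros ν = h := by
  simpa only [numZeros, Bool.not_eq_true, card_univ, Fintype.card_fin] using
    card_filter_add_card_filter_not (s := univ) (fun t : Fin h => ν t = true)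

lemma card_filter_eq_true (ν : Fin h → Bool) :
    #{t | ν t = true} = h - numZeros ν :=
  Nat.eq_sub_of_add_eq (card_filter_eq_true_add_numZeros ν)

lemma phi_le_numZeros (ν : Fin h → Bool) (t : Fin h) : phi ν t ≤ numZeros ν := by
  unfold phi
  split_ifs
  · exact card_le_card fun j hj => mem_filter.2 ⟨mem_univ j, (mem_filter.1 hj).2.2⟩
  · exact Nat.zero_le _

-- Since `false < true` in `Bool`, `Antitone ν` says that every one of `ν` precedes every zero.
lemma phi_eq_numZeros_of_antitone {ν : Fin h → Bool} (hν : Antitone ν) {t : Fin h}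
    (ht : ν t = true) : phi ν t = numZeros ν := by
  unfold phi numZeros
  rw [if_pos ht]
  congr 1
  refine filter_congr fun j _ => and_iff_right_of_imp fun hj => ?_
  by_contra! hjt
  simpa [ht, hj, Bool.le_iff_imp] using hν hjt

lemma Delta_eq_prod_filter (ν : Fin h → Bool) :
    Delta ν = ∏ t with ν t = true, (1 + phi ν t) := by
  rw [prod_filter]
  refine prod_congr rfl fun t _ => ?_
  split_ifs with ht
  · rfl
  · simp [phi, ht]

theorem Delta_le (ν : Fin h → Bool) :
    Delta ν ≤ (numZeros ν + 1) ^ (h - numZeros ν) := by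
  rw [Delta_eq_prod_filter, ← card_filter_eq_true]
  refine prod_le_pow_card _ _ _ fun t _ => ?_
  have := phi_le_numZeros ν t
  omega

theorem Delta_eq_of_antitone {ν : Fin h → Bool} (hν : Antitone ν) :
    Delta ν = (numZeros ν + 1) ^ (h - numZeros ν) := by
  rw [Delta_eq_prod_filter, ← card_filter_eq_true, ← prod_const]
  refine prod_congr rfl fun t ht => ?_
  rw [phi_eq_numZeros_of_antitone hν (mem_filter.1 ht).2, add_comm]

end

def groundState (h f : ℕ) : Fin h → Bool := fun t => decide (t.val + 1 ≤ h - f)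

lemma antitone_groundState (h f : ℕ) : Antitone (groundState h f) := by
  intro i j hij
  simp only [groundState, Bool.le_iff_imp, decide_eq_true_eq]
  exact le_trans (Nat.succ_le_succ hij)

lemma numZeros_groundState {h f : ℕ} (hf : f ≤ h) : numZeros (groundState h f) = f := by
  have hsplit := card_filter_eq_true_add_numZeros (groundState h f)
  have hones : #{t | groundState h f t = true} = h - f := by
    simp only [groundState, decide_eq_true_eq, Nat.add_one_le_iff, Fin.card_filter_val_lt]
    omega
  omega

/-- The ground state (ones in positions `1,…,h−f`) has weight `(f+1)^{h−f}`, which is the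
maximum weight among landing states with `f` zeros. -/
theorem stmt17 (h f : ℕ) (hf : f ≤ h) :
    Delta (fun t : Fin h => decide (t.val + 1 ≤ h - f)) = (f + 1) ^ (h - f) ∧
    ∀ ν : Fin h → Bool, numZeros ν = f → Delta ν ≤ (f + 1) ^ (h - f) := by
  refine ⟨?_, fun ν hν => hν ▸ Delta_le ν⟩
  change Delta (groundState h f) = _
  rw [Delta_eq_of_antitone (antitone_groundState h f), numZeros_groundState hf]
end

section
/- In the standard juggling chain on landing states with h and f fixed, the chain is irreducible: for any two landing states ν, ω ∈ {0,1}^h with exactly f zeros each, there is a finite sequence of legal transitions (edges of G_{h,f}) from ν to ω. -/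
/-!
Rotating a state cyclically is always a legal move: wait if `ν₁ = 0`, throw to height `h`
if `ν₁ = 1`. Since `h` rotations give back the state, every rotation is reachable. From a state
with `ν₁ = 1`, a throw to a height `c` with `ν_{c+1} = 0` is the rotation of the state in which
positions `1` and `c + 1` are exchanged. Conjugating by rotations, any ball can be exchanged with
any empty slot; such exchanges generate all rearrangements of a state, and two states with the
same number of zeros are rearrangements of each other.
-/

open Finset
open scoped Classical

theorem exists_perm_comp_eq_of_card_fiber_eq {α β : Type*} [Finite α] {f g : α → β}
    (hfg : ∀ b, Nat.card {a // f a = b} = Nat.card {a // g a = b}) :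
    ∃ p : Equiv.Perm α, g = f ∘ p := by
  have e : ∀ b, {a // g a = b} ≃ {a // f a = b} := fun b =>
    (Finite.card_eq.mp (hfg b).symm).some
  exact ⟨Equiv.ofFiberEquiv e, funext fun a => (Equiv.ofFiberEquiv_map e a).symm⟩

theorem numZeros_eq_natCard {h : ℕ} (ν : Fin h → Bool) :
    numZeros ν = Nat.card {t // ν t = false} := by
  rw [numZeros, Nat.card_eq_fintype_card, Fintype.card_subtype]

theorem exists_perm_comp_eq_of_numZeros_eq {h : ℕ} {ν ω : Fin h → Bool}
    (hνω : numZeros ν = numZeros ω) : ∃ p : Equiv.Perm (Fin h), ω = ν ∘ p := by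
  rw [numZeros_eq_natCard, numZeros_eq_natCard] at hνω
  refine exists_perm_comp_eq_of_card_fiber_eq fun b => ?_
  cases b
  · exact hνω
  · simp only [← Bool.not_eq_false, Nat.card_eq_fintype_card] at hνω ⊢
    exact Fintype.card_compl_eq_card_compl _ _ hνω

def JugglingStep {h : ℕ} (x y : Fin h → Bool) : Prop :=
  (getB x 1 = false ∧ y = theta 0 x) ∨
  (getB x 1 = true ∧ ∃ j, 1 ≤ j ∧ j ≤ h ∧ getB x (j + 1) = false ∧ y = theta j x)

section

variable {n : ℕ}

theorem getB_val_add_one (ν : Fin (n + 1) → Bool) (t : Fin (n + 1)) :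
    getB ν (t.val + 1) = ν t := by
  rw [getB, dif_pos (by omega)]
  simp

theorem getB_of_lt (ν : Fin (n + 1) → Bool) {j : ℕ} (hj : n + 1 < j) : getB ν j = false := by
  rw [getB, dif_neg (by omega)]

theorem theta_apply (j : ℕ) (ν : Fin (n + 1) → Bool) (t : Fin (n + 1)) :
    theta j ν t = if t.val + 1 = j then true else if t = Fin.last n then false else ν (t + 1) := by
  rw [theta]
  congr 1
  split_ifs with ht
  · exact getB_of_lt ν (by simp [ht])
  · rw [← getB_val_add_one ν (t + 1), Fin.val_add_one_of_lt (Fin.lt_last_iff_ne_last.mpr ht)]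

theorem jugglingStep_rotate (ν : Fin (n + 1) → Bool) : JugglingStep ν (fun t => ν (t + 1)) := by
  have hν0 := getB_val_add_one ν 0
  cases h0 : ν 0
  · refine Or.inl ⟨hν0.trans h0, funext fun t => ?_⟩
    rw [theta_apply]
    split_ifs with ht <;> simp_all
  · refine Or.inr ⟨hν0.trans h0, n + 1, by omega, le_rfl, getB_of_lt ν (by omega),
      funext fun t => ?_⟩
    rcases eq_or_ne t (Fin.last n) with rfl | ht
    · simp [theta_apply, h0]
    · have : t.val ≠ n := by simpa [Fin.ext_iff] using ht
      simp [theta_apply, ht, this]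

theorem jugglingStep_throw (ν : Fin (n + 1) → Bool) {c : Fin (n + 1)} (hc : c ≠ 0)
    (hν0 : ν 0 = true) (hνc : ν c = false) :
    JugglingStep ν (fun t => ν (Equiv.swap 0 c (t + 1))) := by
  have hc0 : 1 ≤ c.val := Nat.one_le_iff_ne_zero.mpr (Fin.val_ne_zero_iff.mpr hc)
  refine Or.inr ⟨(getB_val_add_one ν 0).trans hν0, c.val, hc0, c.isLt.le,
    (getB_val_add_one ν c).trans hνc, funext fun t => ?_⟩
  rcases eq_or_ne t (Fin.last n) with rfl | ht
  · have : n + 1 ≠ c.val := by omega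
    simp [theta_apply, hνc, this]
  · have hval := Fin.val_add_one_of_lt (Fin.lt_last_iff_ne_last.mpr ht)
    have ht0 : t + 1 ≠ 0 := fun e => by simp [e] at hval
    by_cases htc : t.val + 1 = c.val
    · have : t + 1 = c := Fin.ext (hval.trans htc)
      simp [theta_apply, htc, this, hν0]
    · have : t + 1 ≠ c := fun e => htc (hval ▸ congrArg Fin.val e)
      simp [theta_apply, htc, ht, Equiv.swap_apply_of_ne_of_ne ht0 this]

theorem reflTransGen_rotate (ν : Fin (n + 1) → Bool) (k : Fin (n + 1)) :
    Relation.ReflTransGen JugglingStep ν (fun t => ν (t + k)) := by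
  induction k using Fin.induction with
  | zero => simpa using Relation.ReflTransGen.refl
  | succ k ih =>
    refine ih.tail ?_
    convert jugglingStep_rotate (fun t => ν (t + k.castSucc)) using 3 with t
    rw [← Fin.coeSucc_eq_succ]
    ac_rfl

theorem reflTransGen_comp_swap (ν : Fin (n + 1) → Bool) (a c : Fin (n + 1)) :
    Relation.ReflTransGen JugglingStep ν (ν ∘ Equiv.swap a c) := by
  rcases eq_or_ne (ν a) (ν c) with hac | hac
  · rw [Equiv.comp_swap_eq_update, hac, Function.update_eq_self, ← hac, Function.update_eq_self]
  wlog ha : ν a = true generalizing a c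
  · rw [Equiv.swap_comm]
    exact this c a hac.symm (by simpa [ha] using hac)
  have hc : ν c = false := by simpa [ha] using hac.symm
  have hca : c - a ≠ 0 := sub_ne_zero.mpr fun e => hac (e ▸ rfl)
  have throw := jugglingStep_throw (fun t => ν (t + a)) hca (by simpa) (by simpa)
  refine ((reflTransGen_rotate ν a).tail throw).trans ?_
  -- rotating back by `a + 1` turns the exchange of `0` and `c - a` into that of `a` and `c`
  convert reflTransGen_rotate _ (-(a + 1)) using 1
  funext t
  have hrot : t + -(a + 1) + 1 = t - a := by abel
  simp only [Function.comp_apply, hrot]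
  congr 1
  simp only [Equiv.swap_apply_def, sub_eq_zero, sub_left_inj]
  split_ifs <;> subst_vars <;> abel

theorem reflTransGen_comp_perm (p : Equiv.Perm (Fin (n + 1))) (ν : Fin (n + 1) → Bool) :
    Relation.ReflTransGen JugglingStep ν (ν ∘ p) := by
  induction p using Equiv.Perm.swap_induction_on generalizing ν with
  | one => exact .refl
  | swap_mul p a c _ ih =>
    rw [Equiv.Perm.coe_mul, ← Function.comp_assoc]
    exact (reflTransGen_comp_swap ν a c).trans (ih _)

end

theorem stmt18_general (h f : ℕ) (ν ω : Fin h → Bool)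
    (hν : numZeros ν = f) (hω : numZeros ω = f) :
    Relation.ReflTransGen
      (fun x y : Fin h → Bool =>
        (getB x 1 = false ∧ y = theta 0 x) ∨
        (getB x 1 = true ∧ ∃ j, 1 ≤ j ∧ j ≤ h ∧ getB x (j + 1) = false ∧ y = theta j x))
      ν ω := by
  obtain ⟨p, rfl⟩ := exists_perm_comp_eq_of_numZeros_eq (hν.trans hω.symm)
  cases h with
  | zero => rw [Subsingleton.elim (ν ∘ p) ν]
  | succ n => exact reflTransGen_comp_perm p ν

/-- The standard juggling chain is irreducible: any state with `f` zeros can be reached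
from any other by a finite sequence of legal transitions. -/
theorem stmt18 (h f : ℕ) (hf : f ≤ h) (ν ω : Fin h → Bool)
    (hν : numZeros ν = f) (hω : numZeros ω = f) :
    Relation.ReflTransGen
      (fun x y : Fin h → Bool =>
        (getB x 1 = false ∧ y = theta 0 x) ∨
        (getB x 1 = true ∧ ∃ j, 1 ≤ j ∧ j ≤ h ∧ getB x (j + 1) = false ∧ y = theta j x))
      ν ω :=
  stmt18_general h f ν ω hν hω
end
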